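/- For a line network of length L in which every link is the same packet erasure channel with erasure probability ε, the batched-code capacity with batch size 1 and inner block-length N equals C_L(1,N) = ((1−ε^N)^L / N)·log|𝒜|, and this capacity is achieved by repetition recoding (each node retransmits the recovered symbol N times, or sends e if all N received symbols are erased). -/

import Mathlib

/-!
A block of `N` erasure-channel uses erases every symbol with probability at least `ε ^ N`,
whatever was sent, so its transition matrix is `(1 - ε ^ N) R + 1 cᵀ` with `R` stochastic and `c ≥ 0`
independent of the input. Such a splitting survives multiplication by stochastic matrices, with the
weights multiplying, so the end-to-end channel of any batched code is `(1 - ε ^ N) ^ L W' + 1 cᵀ`.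
By the log-sum inequality its mutual information is at most
`(1 - ε ^ N) ^ L I(p, W') ≤ (1 - ε ^ N) ^ L H(p) ≤ (1 - ε ^ N) ^ L log |A|`.

Under repetition recoding the batch symbol crosses a link unless all `N` copies are erased, and
any non-erased output determines it, so the end-to-end channel is an erasure channel that delivers
the symbol with probability `(1 - ε ^ N) ^ L`; at the uniform input its mutual information is
exactly `(1 - ε ^ N) ^ L log |A|`.
-/

open scoped BigOperators

def IsDist {α : Type*} [Fintype α] (p : α → ℝ) : Prop :=
  (∀ x, 0 ≤ p x) ∧ ∑ x, p x = 1

def IsStoch {α β : Type*} [Fintype α] [Fintype β] (W : Matrix α β ℝ) : Prop :=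
  ∀ x, (∀ y, 0 ≤ W x y) ∧ ∑ y, W x y = 1

/-- Mutual information `I(p, W)` (base-2 logarithm) between the input of channel `W`,
distributed according to `p`, and the corresponding output. -/
noncomputable def mutualInfo {α β : Type*} [Fintype α] [Fintype β]
    (p : α → ℝ) (W : Matrix α β ℝ) : ℝ :=
  ∑ x, ∑ y, p x * W x y * Real.logb 2 (W x y / ∑ x', p x' * W x' y)

/-- `N`-fold memoryless extension `Q^{⊗N}` of a channel. -/
noncomputable def tensorPow {α β : Type*} [Fintype α] [Fintype β] (N : ℕ)
    (Q : Matrix α β ℝ) : Matrix (Fin N → α) (Fin N → β) ℝ :=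
  Matrix.of fun u y => ∏ i, Q (u i) (y i)

/-- `chain Q Φ n = Q 0 * Φ 0 * Q 1 * Φ 1 * ⋯ * Q n`. -/
noncomputable def chain {β γ : Type*} [Fintype β] [Fintype γ]
    (Q : ℕ → Matrix β γ ℝ) (Φ : ℕ → Matrix γ β ℝ) : ℕ → Matrix β γ ℝ
  | 0 => Q 0
  | (n+1) => chain Q Φ n * Φ n * Q (n+1)

/-- End-to-end transition matrix `W_L = F Q₁^{⊗N} Φ₁ Q₂^{⊗N} ⋯ Φ_{L-1} Q_L^{⊗N}` of a
batched code with batch alphabet `A`, batch size `M`, inner block-length `N`,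
over the line network of length `L` whose `ℓ`-th link is the DMC `Q (ℓ-1)` (0-indexed). -/
noncomputable def endToEnd {A Qi Qo : Type*} [Fintype A] [Fintype Qi] [Fintype Qo]
    (L M N : ℕ)
    (F : Matrix (Fin M → A) (Fin N → Qi) ℝ)
    (Q : ℕ → Matrix Qi Qo ℝ)
    (Φ : ℕ → Matrix (Fin N → Qo) (Fin N → Qi) ℝ) :
    Matrix (Fin M → A) (Fin N → Qo) ℝ :=
  F * chain (fun ℓ => tensorPow N (Q ℓ)) Φ (L - 1)

/-- Shannon capacity of a DMC, as the supremum of mutual information over input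
distributions. -/
noncomputable def capacity {α β : Type*} [Fintype α] [Fintype β] (W : Matrix α β ℝ) : ℝ :=
  sSup {I : ℝ | ∃ p : α → ℝ, IsDist p ∧ I = mutualInfo p W}

/-- The packet erasure channel with packet alphabet `A` and erasure probability `ε`
(`none` is the erasure `e`). -/
noncomputable def eraCh (A : Type*) [DecidableEq A] (ε : ℝ) :
    Matrix (Option A) (Option A) ℝ :=
  Matrix.of fun x y =>
    match x with
    | none => if y = none then 1 else 0
    | some a => if y = some a then 1 - ε else if y = none then ε else 0

/-- The symbol recovered from `N` received symbols: the first non-erased symbol,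
or `none` if all `N` received symbols are erased. -/
def recover {A : Type*} {N : ℕ} (y : Fin N → Option A) : Option A :=
  ((List.ofFn y).reduceOption).head?

/-- Repetition recoding at the source: transmit the batch symbol `N` times. -/
noncomputable def repF (A : Type*) [DecidableEq A] (N : ℕ) :
    Matrix (Fin 1 → A) (Fin N → Option A) ℝ :=
  Matrix.of fun x u => if u = fun _ => some (x 0) then 1 else 0

/-- Repetition recoding at an intermediate node: retransmit the recovered symbol `N`
times, or send the erasure `N` times if all `N` received symbols are erased. -/
noncomputable def repPhi (A : Type*) [DecidableEq A] (N : ℕ) :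
    Matrix (Fin N → Option A) (Fin N → Option A) ℝ :=
  Matrix.of fun y u => if u = fun _ => recover y then 1 else 0

open Finset Real Matrix

section InformationMeasures

variable {α β : Type*} [Fintype α]

noncomputable def entropy (p : α → ℝ) : ℝ :=
  ∑ x, p x * logb 2 (p x)⁻¹

lemma entropy_le_logb_card {p : α → ℝ} (hp : IsDist p) :
    entropy p ≤ logb 2 (Fintype.card α) := by
  obtain ⟨x₀, -, -⟩ := exists_ne_zero_of_sum_ne_zero (hp.2 ▸ one_ne_zero : ∑ x, p x ≠ 0)
  set K : ℝ := (Fintype.card α : ℝ)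
  have hK : 0 < K := by simpa [K] using Fintype.card_pos_iff.2 ⟨x₀⟩
  have hJensen := concaveOn_negMulLog.le_map_sum (t := univ) (w := fun _ => K⁻¹) (p := p)
    (fun _ _ => by positivity)
    (by rw [sum_const, card_univ, nsmul_eq_mul]; exact mul_inv_cancel₀ hK.ne') (fun x _ => hp.1 x)
  simp only [smul_eq_mul, ← mul_sum, hp.2, mul_one] at hJensen
  have hsum : ∑ x, negMulLog (p x) ≤ log K := by
    have := mul_le_mul_of_nonneg_left hJensen hK.le
    rwa [← mul_assoc, mul_inv_cancel₀ hK.ne', one_mul, negMulLog, log_inv,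
      neg_mul_neg, ← mul_assoc, mul_inv_cancel₀ hK.ne', one_mul] at this
  have hterm : ∀ x, p x * logb 2 (p x)⁻¹ = negMulLog (p x) / log 2 := fun x => by
    rw [negMulLog, logb, log_inv]; ring
  simp only [entropy, hterm, ← sum_div]
  exact div_le_div_of_nonneg_right hsum (log_nonneg one_le_two)

lemma entropy_uniform :
    entropy (fun _ : α => (Fintype.card α : ℝ)⁻¹) = logb 2 (Fintype.card α) := by
  rcases eq_or_ne (Fintype.card α : ℝ) 0 with hK | hK
  · simp [entropy, hK]
  · simp [entropy, mul_inv_cancel_left₀ hK]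

lemma isDist_uniform [Nonempty α] : IsDist (fun _ : α => (Fintype.card α : ℝ)⁻¹) :=
  ⟨fun _ => by positivity, by simp⟩

lemma mul_le_vecMul_apply {p : α → ℝ} {W : Matrix α β ℝ} (hp : 0 ≤ p) (hW : ∀ x y, 0 ≤ W x y)
    (x : α) (y : β) : p x * W x y ≤ (p ᵥ* W) y :=
  single_le_sum (f := fun x => p x * W x y) (fun x _ => mul_nonneg (hp x) (hW x y)) (mem_univ x)

variable [Fintype β]

lemma mutualInfo_eq (p : α → ℝ) (W : Matrix α β ℝ) :
    mutualInfo p W = ∑ x, ∑ y, p x * W x y * logb 2 (W x y / (p ᵥ* W) y) :=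
  rfl

lemma mutualInfo_le_entropy {p : α → ℝ} {W : Matrix α β ℝ} (hp : IsDist p) (hW : IsStoch W) :
    mutualInfo p W ≤ entropy p := by
  have hterm : ∀ x y, p x * W x y * logb 2 (W x y / (p ᵥ* W) y)
      ≤ p x * W x y * logb 2 (p x)⁻¹ := by
    intro x y
    rcases (hp.1 x).eq_or_lt with hx | hx
    · simp [← hx]
    rcases ((hW x).1 y).eq_or_lt with hxy | hxy
    · simp [← hxy]
    have hle := mul_le_vecMul_apply hp.1 (fun x => (hW x).1) x y
    have hq : 0 < (p ᵥ* W) y := lt_of_lt_of_le (by positivity) hle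
    have hratio : W x y / (p ᵥ* W) y ≤ (p x)⁻¹ := by
      rw [div_le_iff₀ hq, ← div_eq_inv_mul, le_div_iff₀ hx, mul_comm]
      exact hle
    exact mul_le_mul_of_nonneg_left (logb_le_logb_of_le one_lt_two (div_pos hxy hq) hratio)
      (by positivity)
  calc mutualInfo p W ≤ ∑ x, ∑ y, p x * W x y * logb 2 (p x)⁻¹ :=
        sum_le_sum fun x _ => sum_le_sum fun y _ => hterm x y
    _ = entropy p := by
        refine sum_congr rfl fun x _ => ?_
        rw [← sum_mul, ← mul_sum, (hW x).2, mul_one]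

lemma mutualInfo_eq_of_erasure {p : α → ℝ} {W : Matrix α β ℝ} (hp : IsDist p) (hW : IsStoch W)
    {y₀ : β} {η : ℝ} (hη : ∀ x, W x y₀ = η)
    (hdet : ∀ y ≠ y₀, ∀ x x', W x y ≠ 0 → W x' y ≠ 0 → x = x') :
    mutualInfo p W = (1 - η) * entropy p := by
  classical
  have hterm : ∀ x y, p x * W x y * logb 2 (W x y / (p ᵥ* W) y)
      = p x * logb 2 (p x)⁻¹ * (W x y - if y = y₀ then η else 0) := by
    intro x y
    by_cases hy : y = y₀
    · subst hy
      have hq : (p ᵥ* W) y = η := by simp [vecMul, dotProduct, hη, ← sum_mul, hp.2]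
      rcases eq_or_ne η 0 with h | h <;> simp [hq, hη, h]
    rcases eq_or_ne (W x y) 0 with hxy | hxy
    · simp [hxy, hy]
    have hq : (p ᵥ* W) y = p x * W x y := by
      refine sum_eq_single x (fun x' _ hx' => ?_) (by simp)
      by_contra h
      exact hx' (hdet y hy x' x (right_ne_zero_of_mul h) hxy)
    rcases eq_or_ne (p x) 0 with hx | hx
    · simp [hx]
    rw [hq, if_neg hy, sub_zero, div_mul_cancel_right₀ hxy]
    ring
  calc mutualInfo p W = ∑ x, (1 - η) * (p x * logb 2 (p x)⁻¹) := by
        rw [mutualInfo_eq]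
        refine sum_congr rfl fun x _ => ?_
        simp only [hterm, ← mul_sum, sum_sub_distrib, (hW x).2, sum_ite_eq', mem_univ, if_true]
        ring
    _ = (1 - η) * entropy p := by rw [entropy, mul_sum]

end InformationMeasures

lemma add_mul_logb_div_add_le {a b c : ℝ} (ha : 0 ≤ a) (hb : 0 ≤ b) (hc : 0 ≤ c)
    (hab : b = 0 → a = 0) :
    (a + c) * logb 2 ((a + c) / (b + c)) ≤ a * logb 2 (a / b) := by
  suffices h : (a + c) * log ((a + c) / (b + c)) ≤ a * log (a / b) by
    simp only [logb, ← mul_div_assoc]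
    exact div_le_div_of_nonneg_right h (log_nonneg one_le_two)
  rcases hc.eq_or_lt with rfl | hc
  · simp
  rcases hb.eq_or_lt with rfl | hb
  · simp [hab rfl, div_self hc.ne']
  have hbc : 0 < b + c := by linarith
  -- convexity of `x log x` between the points `a / b` and `1`, with weights `b : c`
  have h := convexOn_mul_log.2 (Set.mem_Ici.2 (div_nonneg ha hb.le)) (Set.mem_Ici.2 zero_le_one)
    (div_nonneg hb.le hbc.le) (div_nonneg hc.le hbc.le) (by rw [← add_div, div_self hbc.ne'])
  have harg : b / (b + c) * (a / b) + c / (b + c) = (a + c) / (b + c) := by field_simp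
  simp only [smul_eq_mul, mul_one, log_one, mul_zero, add_zero, harg] at h
  simpa only [← mul_assoc, mul_div_cancel₀ _ hbc.ne', mul_div_cancel₀ _ hb.ne'] using
    mul_le_mul_of_nonneg_left h hbc.le

section StochasticMatrices

variable {α β γ : Type*} [Fintype α] [Fintype β] [Fintype γ]

lemma IsStoch.mul {M : Matrix α β ℝ} {P : Matrix β γ ℝ} (hM : IsStoch M) (hP : IsStoch P) :
    IsStoch (M * P) := by
  refine fun x => ⟨fun y => sum_nonneg fun z _ => mul_nonneg ((hM x).1 z) ((hP z).1 y), ?_⟩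
  simp only [mul_apply]
  rw [sum_comm]
  simp only [← mul_sum, (hP _).2, mul_one, (hM x).2]

lemma isStoch_deterministic [DecidableEq β] (f : α → β) :
    IsStoch (of fun x y => if y = f x then (1 : ℝ) else 0) :=
  fun x => ⟨fun y => by simp only [of_apply]; split_ifs <;> norm_num, by simp⟩

lemma isStoch_tensorPow {Q : Matrix α β ℝ} (hQ : IsStoch Q) (N : ℕ) :
    IsStoch (tensorPow N Q) := by
  simp only [IsStoch, tensorPow, of_apply]
  refine fun u => ⟨fun y => prod_nonneg fun i _ => (hQ (u i)).1 (y i), ?_⟩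
  rw [← Fintype.prod_sum]
  simp [(hQ _).2]

lemma isStoch_chain {Q : ℕ → Matrix β γ ℝ}
    {Φ : ℕ → Matrix γ β ℝ} (hQ : ∀ ℓ, IsStoch (Q ℓ)) (hΦ : ∀ ℓ, IsStoch (Φ ℓ)) (n : ℕ) :
    IsStoch (chain Q Φ n) := by
  induction n with
  | zero => exact hQ 0
  | succ n ih => exact (ih.mul (hΦ n)).mul (hQ (n + 1))

lemma pow_le_tensorPow_apply {Q : Matrix α β ℝ} {y₀ : β} {r : ℝ} (hr : 0 ≤ r)
    (h : ∀ x, r ≤ Q x y₀) (N : ℕ) (u : Fin N → α) :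
    r ^ N ≤ tensorPow N Q u (fun _ => y₀) := by
  simpa [tensorPow] using prod_le_prod (s := univ) (fun _ _ => hr) (fun i _ => h (u i))

end StochasticMatrices

section InformativePart

variable {α β γ : Type*} [Fintype α] [Fintype β] [Fintype γ]

/-- Only the fraction `t` of the channel `W` depends on its input. -/
def HasInformativePart (t : ℝ) (W : Matrix α β ℝ) : Prop :=
  ∃ W' : Matrix α β ℝ, IsStoch W' ∧ ∃ c : β → ℝ, 0 ≤ c ∧ ∀ x y, W x y = t * W' x y + c y

lemma IsStoch.hasInformativePart_one {W : Matrix α β ℝ} (hW : IsStoch W) :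
    HasInformativePart 1 W :=
  ⟨W, hW, 0, le_rfl, fun x y => by simp⟩

lemma HasInformativePart.nonneg {t : ℝ} {W : Matrix α β ℝ} (hW : HasInformativePart t W)
    (ht : 0 ≤ t) (x : α) (y : β) : 0 ≤ W x y := by
  obtain ⟨W', hW', c, hc, hWeq⟩ := hW
  rw [hWeq]
  exact add_nonneg (mul_nonneg ht ((hW' x).1 y)) (hc y)

lemma HasInformativePart.mul {t s : ℝ} {W : Matrix α β ℝ} {P : Matrix β γ ℝ}
    (hW : HasInformativePart t W) (hP : HasInformativePart s P) (ht : 0 ≤ t) (hs : 0 ≤ s) :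
    HasInformativePart (t * s) (W * P) := by
  have hPnn := hP.nonneg hs
  obtain ⟨W', hW', c, hc, hWeq⟩ := hW
  obtain ⟨P', hP', d, hd, hPeq⟩ := hP
  refine ⟨W' * P', hW'.mul hP', t • d + c ᵥ* P, fun y => ?_, fun x y => ?_⟩
  · exact add_nonneg (mul_nonneg ht (hd y)) (sum_nonneg fun z _ => mul_nonneg (hc z) (hPnn z y))
  have hrow : ∑ z, W' x z * P z y = s * (W' * P') x y + d y := by
    simp only [hPeq, mul_add, sum_add_distrib, mul_apply, ← sum_mul, (hW' x).2, one_mul,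
      mul_left_comm _ s, ← mul_sum]
  calc (W * P) x y = ∑ z, (t * W' x z + c z) * P z y := by simp only [mul_apply, hWeq]
    _ = t * ∑ z, W' x z * P z y + (c ᵥ* P) y := by
        simp only [add_mul, sum_add_distrib, mul_sum, mul_assoc]; rfl
    _ = t * s * (W' * P') x y + (t • d + c ᵥ* P) y := by
        rw [hrow]; simp only [Pi.add_apply, Pi.smul_apply, smul_eq_mul]; ring

lemma IsStoch.hasInformativePart_of_le {P : Matrix α β ℝ} (hP : IsStoch P) {y₀ : β} {r : ℝ}
    (hr0 : 0 ≤ r) (hr1 : r < 1) (h : ∀ x, r ≤ P x y₀) : HasInformativePart (1 - r) P := by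
  classical
  have hr : 0 < 1 - r := by linarith
  set c : β → ℝ := fun y => if y = y₀ then r else 0
  refine ⟨Matrix.of fun x y => (P x y - c y) / (1 - r), fun x => ⟨fun y => ?_, ?_⟩, c,
    fun y => by by_cases hy : y = y₀ <;> simp [c, hy, hr0], fun x y => ?_⟩
  · refine div_nonneg ?_ hr.le
    by_cases hy : y = y₀
    · simpa [c, hy] using h x
    · simpa [c, hy] using (hP x).1 y
  · simp only [of_apply, ← sum_div, sum_sub_distrib, (hP x).2, c, sum_ite_eq', mem_univ, if_true]
    exact div_self hr.ne'
  · simp only [of_apply]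
    field_simp
    ring

lemma HasInformativePart.mutualInfo_le {t : ℝ} {W : Matrix α β ℝ} (hW : HasInformativePart t W)
    (ht : 0 ≤ t) {p : α → ℝ} (hp : IsDist p) : mutualInfo p W ≤ t * entropy p := by
  obtain ⟨W', hW', c, hc, hWeq⟩ := hW
  have hq : ∀ y, (p ᵥ* W) y = t * (p ᵥ* W') y + c y := fun y => by
    simp only [vecMul, dotProduct, hWeq, mul_add, sum_add_distrib, ← sum_mul, hp.2, one_mul,
      mul_left_comm _ t, ← mul_sum]
  have hterm : ∀ x y, p x * W x y * logb 2 (W x y / (p ᵥ* W) y)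
      ≤ t * (p x * W' x y * logb 2 (W' x y / (p ᵥ* W') y)) := by
    intro x y
    rcases (hp.1 x).eq_or_lt with hx | hx
    · simp [← hx]
    have hle := mul_le_vecMul_apply hp.1 (fun x => (hW' x).1) x y
    have hlogsum := add_mul_logb_div_add_le (mul_nonneg ht ((hW' x).1 y))
      (mul_nonneg ht ((mul_nonneg hx.le ((hW' x).1 y)).trans hle)) (hc y) fun h => by
        rcases mul_eq_zero.1 h with h | h
        · simp [h]
        · have := le_antisymm (h ▸ hle) (mul_nonneg hx.le ((hW' x).1 y))
          simp [(mul_eq_zero.1 this).resolve_left hx.ne']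
    calc p x * W x y * logb 2 (W x y / (p ᵥ* W) y)
        = p x * ((t * W' x y + c y) * logb 2 ((t * W' x y + c y) / (t * (p ᵥ* W') y + c y))) := by
          rw [hWeq, hq, mul_assoc]
      _ ≤ p x * (t * W' x y * logb 2 (t * W' x y / (t * (p ᵥ* W') y))) :=
          mul_le_mul_of_nonneg_left hlogsum hx.le
      _ = t * (p x * W' x y * logb 2 (W' x y / (p ᵥ* W') y)) := by
          rcases ht.eq_or_lt with rfl | ht
          · simp
          · rw [mul_div_mul_left _ _ ht.ne']; ring
  calc mutualInfo p W ≤ ∑ x, ∑ y, t * (p x * W' x y * logb 2 (W' x y / (p ᵥ* W') y)) :=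
        sum_le_sum fun x _ => sum_le_sum fun y _ => hterm x y
    _ = t * mutualInfo p W' := by simp only [← mul_sum]; rfl
    _ ≤ t * entropy p := mul_le_mul_of_nonneg_left (mutualInfo_le_entropy hp hW') ht

lemma hasInformativePart_chain {Q : ℕ → Matrix β γ ℝ}
    {Φ : ℕ → Matrix γ β ℝ} {s : ℝ} (hQ : ∀ ℓ, HasInformativePart s (Q ℓ))
    (hΦ : ∀ ℓ, IsStoch (Φ ℓ)) (hs : 0 ≤ s) (n : ℕ) :
    HasInformativePart (s ^ (n + 1)) (chain Q Φ n) := by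
  induction n with
  | zero => simpa [chain] using hQ 0
  | succ n ih =>
    have h := (ih.mul (hΦ n).hasInformativePart_one (by positivity) zero_le_one).mul
      (hQ (n + 1)) (by positivity) hs
    rwa [mul_one, ← pow_succ] at h

lemma hasInformativePart_endToEnd {A Qi Qo : Type*} [Fintype A] [Fintype Qi] [Fintype Qo]
    {L M N : ℕ} {F : Matrix (Fin M → A) (Fin N → Qi) ℝ} {Q : ℕ → Matrix Qi Qo ℝ}
    {Φ : ℕ → Matrix (Fin N → Qo) (Fin N → Qi) ℝ} {s : ℝ} (hF : IsStoch F)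
    (hQ : ∀ ℓ, HasInformativePart s (tensorPow N (Q ℓ))) (hΦ : ∀ ℓ, IsStoch (Φ ℓ))
    (hs : 0 ≤ s) (hL : 0 < L) :
    HasInformativePart (s ^ L) (endToEnd L M N F Q Φ) := by
  have h := hF.hasInformativePart_one.mul (hasInformativePart_chain hQ hΦ hs (L - 1)) zero_le_one
    (by positivity)
  rwa [one_mul, Nat.sub_add_cancel hL] at h

end InformativePart

section ErasureChannel

variable {A : Type*} [DecidableEq A] {ε : ℝ}

lemma le_eraCh_apply_none (h1 : ε ≤ 1) (x : Option A) : ε ≤ eraCh A ε x none := by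
  cases x <;> simp [eraCh, h1]

variable [Fintype A]

lemma isStoch_eraCh (h0 : 0 ≤ ε) (h1 : ε ≤ 1) : IsStoch (eraCh A ε) := by
  intro x
  refine ⟨fun y => ?_, ?_⟩
  · cases x <;> simp only [eraCh, of_apply] <;> split_ifs <;> linarith
  cases x with
  | none => simp [eraCh]
  | some a =>
    rw [Fintype.sum_option]
    simp [eraCh, sum_ite_eq']

lemma hasInformativePart_tensorPow_eraCh (h0 : 0 ≤ ε) (h1 : ε < 1) {N : ℕ} (hN : 0 < N) :
    HasInformativePart (1 - ε ^ N) (tensorPow N (eraCh A ε)) :=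
  (isStoch_tensorPow (isStoch_eraCh h0 h1.le) N).hasInformativePart_of_le (pow_nonneg h0 N)
    (pow_lt_one₀ h0 h1 hN.ne') (pow_le_tensorPow_apply h0 (le_eraCh_apply_none h1.le) N)

end ErasureChannel

section RepetitionCode

lemma recover_const_none {A : Type*} {N : ℕ} :
    recover (fun _ : Fin N => (none : Option A)) = none := by
  simp [recover]

variable {A : Type*} [Fintype A] [DecidableEq A] {ε : ℝ} {N : ℕ}

lemma tensorPow_eraCh_none_apply (y : Fin N → Option A) :
    tensorPow N (eraCh A ε) (fun _ => none) y = if y = (fun _ => none) then 1 else 0 := by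
  simp only [tensorPow, of_apply, eraCh]
  rw [prod_boole]
  simp [funext_iff]

lemma tensorPow_eraCh_some_none (a : A) :
    tensorPow N (eraCh A ε) (fun _ => some a) (fun _ => none) = ε ^ N := by
  simp [tensorPow, eraCh]

lemma recover_eq_of_tensorPow_eraCh_ne_zero {a : A} {y : Fin N → Option A}
    (hy : tensorPow N (eraCh A ε) (fun _ => some a) y ≠ 0) (hne : y ≠ fun _ => none) :
    recover y = some a := by
  have hval : ∀ i b, y i = some b → b = a := fun i b hi => by
    by_contra hb
    refine hy (prod_eq_zero (mem_univ i) ?_)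
    simp [eraCh, hi, hb]
  obtain ⟨i, b, hi⟩ : ∃ i b, y i = some b := by
    by_contra! h
    exact hne (funext fun i => Option.eq_none_iff_forall_ne_some.2 (h i))
  rcases h : (List.ofFn y).reduceOption with _ | ⟨c, l⟩
  · have : b ∈ (List.ofFn y).reduceOption := by
      rw [List.reduceOption_mem_iff, List.mem_ofFn]
      exact ⟨i, hi⟩
    simp [h] at this
  · have : c ∈ (List.ofFn y).reduceOption := by simp [h]
    rw [List.reduceOption_mem_iff, List.mem_ofFn] at this
    obtain ⟨j, hj⟩ := this
    simp [recover, h, hval j c hj]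

lemma repPhi_mul_apply {γ : Type*} [Fintype γ] (M : Matrix (Fin N → Option A) γ ℝ)
    (w : Fin N → Option A) (y : γ) :
    (repPhi A N * M) w y = M (fun _ => recover w) y := by
  simp [mul_apply, repPhi]

lemma repF_mul_apply {γ : Type*} [Fintype γ] (M : Matrix (Fin N → Option A) γ ℝ)
    (x : Fin 1 → A) (y : γ) :
    (repF A N * M) x y = M (fun _ => some (x 0)) y := by
  simp [mul_apply, repF]

lemma sum_tensorPow_eraCh_mul_recover (h0 : 0 ≤ ε) (h1 : ε ≤ 1) (a : A) (y : Fin N → Option A) :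
    ∑ w, tensorPow N (eraCh A ε) (fun _ => some a) w *
        tensorPow N (eraCh A ε) (fun _ => recover w) y
      = (1 - ε ^ N) * tensorPow N (eraCh A ε) (fun _ => some a) y
        + ε ^ N * (if y = (fun _ => none) then 1 else 0) := by
  have hterm : ∀ w, tensorPow N (eraCh A ε) (fun _ => some a) w *
        tensorPow N (eraCh A ε) (fun _ => recover w) y
      = tensorPow N (eraCh A ε) (fun _ => some a) w * tensorPow N (eraCh A ε) (fun _ => some a) y
        + if w = (fun _ => none) then ε ^ N * ((if y = (fun _ => none) then 1 else 0)
            - tensorPow N (eraCh A ε) (fun _ => some a) y) else 0 := by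
    intro w
    by_cases hw : w = fun _ => none
    · subst hw
      rw [if_pos rfl, recover_const_none, tensorPow_eraCh_none_apply, tensorPow_eraCh_some_none]
      ring
    rw [if_neg hw, add_zero]
    by_cases hBw : tensorPow N (eraCh A ε) (fun _ => some a) w = 0
    · simp [hBw]
    · rw [recover_eq_of_tensorPow_eraCh_ne_zero hBw hw]
  simp only [hterm, sum_add_distrib, ← sum_mul, (isStoch_tensorPow (isStoch_eraCh h0 h1) N _).2,
    sum_ite_eq', mem_univ, if_true]
  ring

lemma chain_repPhi_apply (h0 : 0 ≤ ε) (h1 : ε ≤ 1) (a : A) (n : ℕ) (y : Fin N → Option A) :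
    chain (fun _ => tensorPow N (eraCh A ε)) (fun _ => repPhi A N) n (fun _ => some a) y
      = (1 - ε ^ N) ^ n * tensorPow N (eraCh A ε) (fun _ => some a) y
        + (1 - (1 - ε ^ N) ^ n) * (if y = (fun _ => none) then 1 else 0) := by
  induction n generalizing y with
  | zero => simp [chain]
  | succ n ih =>
    rw [chain, Matrix.mul_assoc, mul_apply]
    simp only [repPhi_mul_apply, ih, add_mul, sum_add_distrib, mul_assoc, ← mul_sum, ite_mul,
      one_mul, zero_mul, sum_ite_eq', mem_univ, if_true, sum_tensorPow_eraCh_mul_recover h0 h1,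
      recover_const_none, tensorPow_eraCh_none_apply]
    ring

lemma endToEnd_repetition_apply (h0 : 0 ≤ ε) (h1 : ε ≤ 1) (L : ℕ) (x : Fin 1 → A)
    (y : Fin N → Option A) :
    endToEnd L 1 N (repF A N) (fun _ => eraCh A ε) (fun _ => repPhi A N) x y
      = (1 - ε ^ N) ^ (L - 1) * tensorPow N (eraCh A ε) (fun _ => some (x 0)) y
        + (1 - (1 - ε ^ N) ^ (L - 1)) * (if y = (fun _ => none) then 1 else 0) := by
  rw [endToEnd, repF_mul_apply, chain_repPhi_apply h0 h1]

lemma mutualInfo_endToEnd_repetition {p : (Fin 1 → A) → ℝ} (hp : IsDist p) (h0 : 0 ≤ ε)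
    (h1 : ε ≤ 1) {L : ℕ} (hL : 0 < L) :
    mutualInfo p (endToEnd L 1 N (repF A N) (fun _ => eraCh A ε) (fun _ => repPhi A N))
      = (1 - ε ^ N) ^ L * entropy p := by
  have hW : IsStoch (endToEnd L 1 N (repF A N) (fun _ => eraCh A ε) (fun _ => repPhi A N)) :=
    (isStoch_deterministic _).mul (isStoch_chain
      (fun _ => isStoch_tensorPow (isStoch_eraCh h0 h1) N) (fun _ => isStoch_deterministic _) _)
  rw [mutualInfo_eq_of_erasure hp hW (y₀ := fun _ => none) (η := 1 - (1 - ε ^ N) ^ L),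
    sub_sub_cancel]
  · intro x
    obtain ⟨L, rfl⟩ : ∃ k, L = k + 1 := ⟨L - 1, by omega⟩
    rw [endToEnd_repetition_apply h0 h1, tensorPow_eraCh_some_none, if_pos rfl,
      Nat.add_sub_cancel, pow_succ]
    ring
  · intro y hy x x' hx hx'
    rw [endToEnd_repetition_apply h0 h1, if_neg hy, mul_zero, add_zero] at hx hx'
    have h := (recover_eq_of_tensorPow_eraCh_ne_zero (right_ne_zero_of_mul hx) hy).symm.trans
      (recover_eq_of_tensorPow_eraCh_ne_zero (right_ne_zero_of_mul hx') hy)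
    funext i
    rw [Subsingleton.elim i 0]
    exact Option.some_injective _ h

end RepetitionCode

/-- For a line network of `L` identical packet erasure channels with
erasure probability `ε`, the batched-code capacity with batch size `1` and inner
block-length `N` equals `C_L(1,N) = ((1-ε^N)^L / N) log|A|`: every batched code with
batch size `1` has rate at most this value, and repetition recoding attains it. -/
theorem stmt3 {A : Type} [Fintype A] [DecidableEq A] (hA : 2 ≤ Fintype.card A)
    (ε : ℝ) (hε : 0 < ε) (hε1 : ε < 1)
    (L N : ℕ) (hL : 0 < L) (hN : 0 < N) :
    (∀ (F : Matrix (Fin 1 → A) (Fin N → Option A) ℝ)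
       (Φ : ℕ → Matrix (Fin N → Option A) (Fin N → Option A) ℝ)
       (p : (Fin 1 → A) → ℝ),
       IsStoch F → (∀ ℓ, IsStoch (Φ ℓ)) → IsDist p →
       (1 / (N : ℝ)) * mutualInfo p (endToEnd L 1 N F (fun _ => eraCh A ε) Φ)
         ≤ ((1 - ε ^ N) ^ L / (N : ℝ)) * Real.logb 2 (Fintype.card A)) ∧
    (∃ p : (Fin 1 → A) → ℝ, IsDist p ∧
       (1 / (N : ℝ)) * mutualInfo p
           (endToEnd L 1 N (repF A N) (fun _ => eraCh A ε) (fun _ => repPhi A N))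
         = ((1 - ε ^ N) ^ L / (N : ℝ)) * Real.logb 2 (Fintype.card A)) := by
  have hs : 0 ≤ 1 - ε ^ N := sub_nonneg.2 (pow_le_one₀ hε.le hε1.le)
  have hcard : Fintype.card (Fin 1 → A) = Fintype.card A := by simp
  constructor
  · intro F Φ p hF hΦ hp
    have hW := hasInformativePart_endToEnd hF
      (fun _ => hasInformativePart_tensorPow_eraCh hε.le hε1 hN) hΦ hs hL
    have hI := (hW.mutualInfo_le (pow_nonneg hs L) hp).trans
      (mul_le_mul_of_nonneg_left (entropy_le_logb_card hp) (pow_nonneg hs L))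
    rw [hcard] at hI
    calc (1 / (N : ℝ)) * mutualInfo p (endToEnd L 1 N F (fun _ => eraCh A ε) Φ)
        ≤ (1 / (N : ℝ)) * ((1 - ε ^ N) ^ L * logb 2 (Fintype.card A)) :=
          mul_le_mul_of_nonneg_left hI (by positivity)
      _ = ((1 - ε ^ N) ^ L / (N : ℝ)) * logb 2 (Fintype.card A) := by ring
  · have : Nonempty A := Fintype.card_pos_iff.1 (by omega)
    refine ⟨_, isDist_uniform, ?_⟩
    rw [mutualInfo_endToEnd_repetition isDist_uniform hε.le hε1.le hL, entropy_uniform, hcard]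
    ring
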